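/- Let D ⊆ ℝ^d, let C : ℝ^d → S^d be continuously differentiable with locally Lipschitz derivative, let x ∈ D, w ∈ ℝ^d, T > 0, and let y : [0, T] → ℝ^d be differentiable with y(0) = x, y′(t) = C(y(t))w for all t ∈ [0, T], and y(t) ∈ D for all t ∈ [0, T]. Let (u, v) ∈ N²_D(x) and assume C(x)u = 0. Then ⟨u, D(Cw)(x)(C(x)w)⟩ + ⟨C(x)w, v · C(x)w⟩ ≤ 0. -/

import Mathlib

open Matrix Set Asymptotics
open scoped RealInnerProductSpace NNReal

noncomputable section

/-- `ℝ^d` with the Euclidean inner product and norm. -/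
abbrev Vec (d : ℕ) := EuclideanSpace ℝ (Fin d)

/-- real `d × d` matrices. -/
abbrev Mat (d : ℕ) := Matrix (Fin d) (Fin d) ℝ

attribute [local instance] Matrix.normedAddCommGroup Matrix.normedSpace

/-- A matrix acting on a vector of `ℝ^d`. -/
def mv {d : ℕ} (A : Mat d) (u : Vec d) : Vec d := WithLp.toLp 2 (A.mulVec u)

/-- The `j`-th canonical basis vector of `ℝ^d`. -/
def evec {d : ℕ} (j : Fin d) : Vec d := EuclideanSpace.single j 1

/-- The first-order normal cone `N¹_D(x)`. -/
def normalCone1 {d : ℕ} (D : Set (Vec d)) (x : Vec d) : Set (Vec d) :=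
  {u | ∀ ε > (0:ℝ), ∃ δ > (0:ℝ), ∀ y ∈ D, ‖y - x‖ ≤ δ → ⟪u, y - x⟫ ≤ ε * ‖y - x‖}

/-- The second-order normal cone `N²_D(x) ⊆ ℝ^d × S^d`. -/
def normalCone2 {d : ℕ} (D : Set (Vec d)) (x : Vec d) : Set (Vec d × Mat d) :=
  {p | p.2.IsSymm ∧ ∀ ε > (0:ℝ), ∃ δ > (0:ℝ), ∀ y ∈ D, ‖y - x‖ ≤ δ →
    ⟪p.1, y - x⟫ + (1/2:ℝ) * ⟪y - x, mv p.2 (y - x)⟫ ≤ ε * ‖y - x‖^2}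

/-- The first-order normal cone for subsets of `ℝ`. -/
def normalConeR (D : Set ℝ) (x : ℝ) : Set ℝ :=
  {u | ∀ ε > (0:ℝ), ∃ δ > (0:ℝ), ∀ y ∈ D, |y - x| ≤ δ → u * (y - x) ≤ ε * |y - x|}

/-- The matrix of the orthogonal projection of `ℝ^d` onto the column space (range) of `A`,
i.e. `A A⁺` with `A⁺` the Moore–Penrose pseudoinverse. -/
def projRange {d : ℕ} (A : Mat d) : Mat d :=
  Matrix.toEuclideanLin.symm
    (((LinearMap.range (Matrix.toEuclideanLin A)).subtypeL.comp
      (Submodule.orthogonalProjectionOnto (LinearMap.range (Matrix.toEuclideanLin A)))).toLinearMap)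

/-- The element of `ℝ²` with the two given coordinates. -/
def vec2 (a b : ℝ) : Vec 2 := WithLp.toLp 2 ![a, b]

/-- The Hessian matrix of `φ : ℝ^d → ℝ` at `x`. -/
def hessMat {d : ℕ} (φ : Vec d → ℝ) (x : Vec d) : Mat d :=
  Matrix.of fun i j => fderiv ℝ (fun y => fderiv ℝ φ y (evec j)) x (evec i)

/-- The operator-norm metric on `Vec d →L[ℝ] Mat d` (sup norm on matrices), which instance
search no longer finds by itself. -/
instance instPseudoEMetricSpaceCLMVecMat {d : ℕ} : PseudoEMetricSpace (Vec d →L[ℝ] Mat d) :=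
  letI : NormedAddCommGroup (Vec d →L[ℝ] Mat d) :=
    @ContinuousLinearMap.toNormedAddCommGroup ℝ ℝ (Vec d) (Mat d) _ _ _ _ _ _ (RingHom.id ℝ) _
  inferInstance

/-!
Along the flow, `φ(t) = ⟨u, y(t) - x⟩ + ½⟨y(t) - x, v (y(t) - x)⟩` has derivative
`ψ(t) = ⟨u + v (y(t) - x), C(y(t)) w⟩`. Since `C(x)` is symmetric and kills `u`, `ψ(0) = 0`, and
`ψ'(0)` is the left-hand side `S` of the claim; hence `φ(t) ≥ (S - η) t² / 2` for small `t > 0`.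
On the other hand `‖y(t) - x‖ = O(t)`, so `(u, v) ∈ N²_D(x)` forces `φ(t) ≤ ε t²` for every `ε > 0`.
Together, `S ≤ 0`.
-/

open Filter Topology

section MatrixAction

variable {d : ℕ}

lemma inner_mv_comm_of_isSymm {A : Mat d} (hA : A.IsSymm) (p q : Vec d) :
    ⟪mv A p, q⟫ = ⟪p, mv A q⟫ := by
  conv_rhs => rw [← hA.eq]
  simp only [mv, EuclideanSpace.inner_eq_star_dotProduct]
  simp [Matrix.dotProduct_mulVec, Matrix.vecMul_transpose, dotProduct_comm]

lemma mv_zero (A : Mat d) : mv A 0 = 0 :=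
  map_zero (Matrix.toEuclideanCLM (𝕜 := ℝ) A)

lemma HasDerivWithinAt.const_mv (A : Mat d) {z : ℝ → Vec d} {z' : Vec d} {s : Set ℝ} {t : ℝ}
    (hz : HasDerivWithinAt z z' s t) : HasDerivWithinAt (fun t => mv A (z t)) (mv A z') s t :=
  (Matrix.toEuclideanCLM (𝕜 := ℝ) A).hasFDerivAt.comp_hasDerivWithinAt t hz

lemma DifferentiableAt.mv_const {C : Vec d → Mat d} {x : Vec d} (hC : DifferentiableAt ℝ C x)
    (w : Vec d) : DifferentiableAt ℝ (fun z => mv (C z) w) x := by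
  have hCij : ∀ i j, DifferentiableAt ℝ (fun z => C z i j) x := fun i j =>
    differentiableAt_pi.1 (differentiableAt_pi.1 hC i) j
  rw [differentiableAt_piLp]
  intro i
  simp only [mv, PiLp.toLp_apply, Matrix.mulVec, dotProduct]
  fun_prop

end MatrixAction

section SecondOrderForm

variable {d : ℕ}

def secondOrderForm (u : Vec d) (v : Mat d) (h : Vec d) : ℝ :=
  ⟪u, h⟫ + (1/2 : ℝ) * ⟪h, mv v h⟫

lemma secondOrderForm_zero (u : Vec d) (v : Mat d) : secondOrderForm u v 0 = 0 := by
  simp [secondOrderForm]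

lemma HasDerivWithinAt.secondOrderForm (u : Vec d) {v : Mat d} (hv : v.IsSymm)
    {z : ℝ → Vec d} {z' : Vec d} {s : Set ℝ} {t : ℝ} (hz : HasDerivWithinAt z z' s t) :
    HasDerivWithinAt (fun t => secondOrderForm u v (z t)) ⟪u + mv v (z t), z'⟫ s t := by
  have hlin := (hasDerivWithinAt_const t s u).inner ℝ hz
  have hquad := hz.inner ℝ (hz.const_mv v)
  refine (hlin.add (hquad.const_mul (1/2 : ℝ))).congr_deriv ?_
  rw [inner_add_left, inner_zero_left, real_inner_comm (mv v (z t)) z',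
    inner_mv_comm_of_isSymm hv (z t) z']
  ring

theorem eventually_secondOrderForm_le_of_mem_normalCone2 {D : Set (Vec d)} {x u : Vec d}
    {v : Mat d} (huv : (u, v) ∈ normalCone2 D x) {α : Type*} {l : Filter α} {γ : α → Vec d}
    (hγ : Tendsto γ l (𝓝 x)) (hγD : ∀ᶠ t in l, γ t ∈ D) {F : Type*} [SeminormedAddCommGroup F]
    {r : α → F} (hr : (fun t => γ t - x) =O[l] r) {ε : ℝ} (hε : 0 < ε) :
    ∀ᶠ t in l, secondOrderForm u v (γ t - x) ≤ ε * ‖r t‖ ^ 2 := by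
  obtain ⟨K, hK, hKr⟩ := hr.exists_pos
  obtain ⟨δ, hδ, hcone⟩ := huv.2 (ε / K ^ 2) (by positivity)
  filter_upwards [hγD, hγ (Metric.closedBall_mem_nhds x hδ), hKr.bound] with t htD htx htr
  calc secondOrderForm u v (γ t - x) ≤ ε / K ^ 2 * ‖γ t - x‖ ^ 2 :=
        hcone (γ t) htD (mem_closedBall_iff_norm.1 htx)
    _ ≤ ε / K ^ 2 * (K * ‖r t‖) ^ 2 := by gcongr
    _ = ε * ‖r t‖ ^ 2 := by field_simp

end SecondOrderForm

theorem eventually_mul_sq_le_sub_of_hasDerivWithinAt {f f' : ℝ → ℝ} {S T : ℝ} (hT : 0 < T)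
    (hf : ∀ t ∈ Icc 0 T, HasDerivWithinAt f (f' t) (Icc 0 T) t) (hf'0 : f' 0 = 0)
    (hf' : HasDerivWithinAt f' S (Icc 0 T) 0) {η : ℝ} (hη : 0 < η) :
    ∀ᶠ t in 𝓝[>] 0, (S - η) * t ^ 2 / 2 ≤ f t - f 0 := by
  have hslope : Tendsto (slope f' 0) (𝓝[>] 0) (𝓝 S) := by
    rw [← nhdsWithin_Ioo_eq_nhdsGT hT, ← hasDerivWithinAt_iff_tendsto_slope' (by simp)]
    exact hf'.mono Ioo_subset_Icc_self
  have hgood : ∀ᶠ s in 𝓝[>] 0, s ∈ Ioo 0 T ∧ S - η < slope f' 0 s :=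
    Eventually.and (Ioo_mem_nhdsGT hT) (hslope.eventually (eventually_gt_nhds (by linarith)))
  obtain ⟨ε, hε, hεgood⟩ := mem_nhdsGT_iff_exists_Ioo_subset.1 hgood
  filter_upwards [Ioo_mem_nhdsGT hε] with t ht
  have hIcc : Icc 0 t ⊆ Icc 0 T := Icc_subset_Icc_right (hεgood ht).1.2.le
  have hslope_lt : ∀ s ∈ Ioo 0 t, (S - η) * s ≤ f' s := by
    intro s hs
    have hs' := (hεgood ⟨hs.1, hs.2.trans ht.2⟩).2
    rw [slope_def_field, hf'0, sub_zero, sub_zero, lt_div_iff₀ hs.1] at hs'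
    exact hs'.le
  have hpoly : ∀ s, HasDerivAt (fun s : ℝ => (S - η) * s ^ 2 / 2) ((S - η) * s) s := fun s =>
    (((hasDerivAt_pow 2 s).const_mul (S - η)).div_const 2).congr_deriv (by push_cast; ring)
  have hmono : MonotoneOn (fun s => f s - (S - η) * s ^ 2 / 2) (Icc 0 t) := by
    refine monotoneOn_of_hasDerivWithinAt_nonneg (f' := fun s => f' s - (S - η) * s)
      (convex_Icc 0 t) ?_ ?_ ?_
    · exact (HasDerivWithinAt.continuousOn fun s hs => (hf s (hIcc hs)).mono hIcc).sub
        (by fun_prop)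
    · rw [interior_Icc]
      exact fun s hs => ((hf s (hIcc (Ioo_subset_Icc_self hs))).mono
        (Ioo_subset_Icc_self.trans hIcc)).sub (hpoly s).hasDerivWithinAt
    · rw [interior_Icc]
      exact fun s hs => sub_nonneg.2 (hslope_lt s hs)
  have := hmono ⟨le_rfl, ht.1.le⟩ ⟨ht.1.le, le_rfl⟩ ht.1.le
  simp only at this
  linarith

lemma nonpos_of_eventually_mul_sq_le {φ : ℝ → ℝ} {S : ℝ}
    (hlow : ∀ η > 0, ∀ᶠ t in 𝓝[>] 0, (S - η) * t ^ 2 / 2 ≤ φ t)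
    (hup : ∀ ε > 0, ∀ᶠ t in 𝓝[>] 0, φ t ≤ ε * ‖t‖ ^ 2) : S ≤ 0 := by
  refine le_of_forall_pos_le_add fun η hη => ?_
  obtain ⟨t, hlow_t, hup_t, ht⟩ :=
    ((hlow (η / 3) (by positivity)).and ((hup (η / 3) (by positivity)).and
      self_mem_nhdsWithin)).exists
  rw [Real.norm_eq_abs, sq_abs] at hup_t
  have ht2 : 0 < t ^ 2 := by positivity
  nlinarith

theorem stmt14_general {d : ℕ} (D : Set (Vec d))
    (C : Vec d → Mat d) (hCsymm : ∀ y, (C y).IsSymm)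
    (hC1 : ContDiff ℝ 1 C)
    (x : Vec d) (w : Vec d) (T : ℝ) (hT : 0 < T)
    (y : ℝ → Vec d) (hy0 : y 0 = x)
    (hyD : ∀ t ∈ Set.Icc 0 T, y t ∈ D)
    (hyder : ∀ t ∈ Set.Icc 0 T, HasDerivWithinAt y (mv (C (y t)) w) (Set.Icc 0 T) t)
    (u : Vec d) (v : Mat d) (huv : (u, v) ∈ normalCone2 D x)
    (hker : mv (C x) u = 0) :
    ⟪u, fderiv ℝ (fun z => mv (C z) w) x (mv (C x) w)⟫ +
      ⟪mv (C x) w, mv v (mv (C x) w)⟫ ≤ 0 := by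
  set g : Vec d → Vec d := fun z => mv (C z) w
  have hy0' : HasDerivWithinAt y (g x) (Icc 0 T) 0 := hy0 ▸ hyder 0 ⟨le_rfl, hT.le⟩
  have hgy : HasDerivWithinAt (fun t => g (y t)) (fderiv ℝ g x (g x)) (Icc 0 T) 0 :=
    ((hC1.differentiable one_ne_zero x).mv_const w).hasFDerivAt.comp_hasDerivWithinAt_of_eq 0
      hy0' hy0.symm
  have hφ : ∀ t ∈ Icc 0 T, HasDerivWithinAt (fun t => secondOrderForm u v (y t - x))
      ⟪u + mv v (y t - x), g (y t)⟫ (Icc 0 T) t :=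
    fun t ht => ((hyder t ht).sub_const x).secondOrderForm u huv.1
  have hψ0 : ⟪u + mv v (y 0 - x), g (y 0)⟫ = 0 := by
    rw [hy0, sub_self, mv_zero, add_zero, ← inner_mv_comm_of_isSymm (hCsymm x), hker,
      inner_zero_left]
  have hψ : HasDerivWithinAt (fun t => ⟪u + mv v (y t - x), g (y t)⟫)
      (⟪u, fderiv ℝ g x (g x)⟫ + ⟪g x, mv v (g x)⟫) (Icc 0 T) 0 := by
    refine (((hy0'.sub_const x).const_mv v).const_add u |>.inner ℝ hgy).congr_deriv ?_
    rw [hy0, sub_self, mv_zero, add_zero, real_inner_comm (g x) (mv v (g x))]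
  have hle : 𝓝[>] (0 : ℝ) ≤ 𝓝[Icc 0 T] 0 := by
    rw [← nhdsWithin_Ioo_eq_nhdsGT hT]
    exact nhdsWithin_mono _ Ioo_subset_Icc_self
  refine nonpos_of_eventually_mul_sq_le (φ := fun t => secondOrderForm u v (y t - x))
    (fun η hη => ?_) (fun ε hε => ?_)
  · filter_upwards [eventually_mul_sq_le_sub_of_hasDerivWithinAt hT hφ hψ0 hψ hη] with t ht
    simpa [hy0, secondOrderForm_zero] using ht
  · refine eventually_secondOrderForm_le_of_mem_normalCone2 huv ?_ ?_ ?_ hε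
    · rw [← hy0]
      exact hy0'.continuousWithinAt.tendsto.mono_left hle
    · exact hle (eventually_nhdsWithin_of_forall hyD)
    · simpa [hy0] using hy0'.hasFDerivWithinAt.isBigO_sub.mono hle

/-- the second-order tangency inequality along the flow `y' = C(y)w`
staying in `D`, for `(u, v) ∈ N²_D(x)` with `C(x)u = 0`. -/
theorem stmt14 {d : ℕ} (D : Set (Vec d))
    (C : Vec d → Mat d) (hCsymm : ∀ y, (C y).IsSymm)
    (hC1 : ContDiff ℝ 1 C) (hClip : LocallyLipschitz (fderiv ℝ C))
    (x : Vec d) (hx : x ∈ D) (w : Vec d) (T : ℝ) (hT : 0 < T)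
    (y : ℝ → Vec d) (hy0 : y 0 = x)
    (hyD : ∀ t ∈ Set.Icc 0 T, y t ∈ D)
    (hyder : ∀ t ∈ Set.Icc 0 T, HasDerivWithinAt y (mv (C (y t)) w) (Set.Icc 0 T) t)
    (u : Vec d) (v : Mat d) (huv : (u, v) ∈ normalCone2 D x)
    (hker : mv (C x) u = 0) :
    ⟪u, fderiv ℝ (fun z => mv (C z) w) x (mv (C x) w)⟫ +
      ⟪mv (C x) w, mv v (mv (C x) w)⟫ ≤ 0 :=
  stmt14_general D C hCsymm hC1 x w T hT y hy0 hyD hyder u v huv hker
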